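/- Within a visible tree, the initial move determined by the local backward induction strategy is weakly preferred (with respect to the subjective preference) to any other first move: let (T,s) be a preference–sight tree, h a history, z* a ⪰-maximal element of Z_h, and a an action with h·a ⊴ z*. Then for every action a' with h·a' ∈ s(h), we have h·a ⪰_h h·a'. -/

import Mathlib

/-- A preference tree: a nonempty finite, prefix-closed set `H` of histories
(finite sequences of actions) containing the empty sequence, together with a
total preorder `pref` (the preference `⪰`) on `H`. -/
structure PrefTree (A : Type) where
  H : Set (List A)
  pref : List A → List A → Prop
  H_finite : H.Finite
  nil_mem : ([] : List A) ∈ H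
  prefix_closed : ∀ ⦃h h' : List A⦄, h <+: h' → h' ∈ H → h ∈ H
  pref_refl : ∀ h ∈ H, pref h h
  pref_trans : ∀ h₁ ∈ H, ∀ h₂ ∈ H, ∀ h₃ ∈ H, pref h₁ h₂ → pref h₂ h₃ → pref h₁ h₃
  pref_total : ∀ h₁ ∈ H, ∀ h₂ ∈ H, pref h₁ h₂ ∨ pref h₂ h₁

/-- A history is terminal if no one-step extension of it lies in `H`. -/
def PrefTree.Terminal {A : Type} (T : PrefTree A) (z : List A) : Prop :=
  z ∈ T.H ∧ ∀ a : A, z ++ [a] ∉ T.H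

/-- A sight function for a preference tree `T`: assigns to each history `h ∈ H` a
finite nonempty subset of `H` of histories extending `h`, containing `h`, and downward closed (DC). -/
structure SightFun (A : Type) (T : PrefTree A) where
  s : List A → Set (List A)
  subset_H : ∀ h ∈ T.H, s h ⊆ T.H
  mem_extends : ∀ h ∈ T.H, ∀ h' ∈ s h, h <+: h'
  s_nonempty : ∀ h ∈ T.H, (s h).Nonempty
  s_finite : ∀ h ∈ T.H, (s h).Finite
  mem_self : ∀ h ∈ T.H, h ∈ s h
  dc : ∀ h ∈ T.H, ∀ h' h'' : List A, h <+: h' → h' <+: h'' → h'' ∈ s h → h' ∈ s h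

/-- `Z_h`: the set of histories in `s h` having no proper extension in `s h`. -/
def SightFun.Zs {A : Type} {T : PrefTree A} (s : SightFun A T) (h : List A) : Set (List A) :=
  {z | z ∈ s.s h ∧ ∀ z' ∈ s.s h, z <+: z' → z' = z}

/-- The subjective preference `h1 ⪰_h h2` at `h`: `z1 ⪰ z2`, where `z1` is a
`⪰`-maximal element of `{z ∈ Z_h : h1 ⊴ z}` and `z2` is a `⪰`-maximal element of
`{z ∈ Z_h : h2 ⊴ z}`. -/
def SubjPref {A : Type} (T : PrefTree A) (s : SightFun A T) (h h₁ h₂ : List A) : Prop :=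
  ∃ z₁ z₂ : List A,
    z₁ ∈ s.Zs h ∧ h₁ <+: z₁ ∧ (∀ w ∈ s.Zs h, h₁ <+: w → T.pref z₁ w) ∧
    z₂ ∈ s.Zs h ∧ h₂ <+: z₂ ∧ (∀ w ∈ s.Zs h, h₂ <+: w → T.pref z₂ w) ∧
    T.pref z₁ z₂

/-! Along `z*` the first move `h·a` reaches the `⪰`-maximum of all of `Z_h`, so `z*` is also a
best terminal history below `h·a`; any best terminal history below `h·a'` lies in `Z_h`
and is therefore weakly worse than `z*`. The only work is to see that the best terminal
history below `h·a'` exists: `s(h)` is finite, and `⪰` is total on `H`. -/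

namespace PrefTree

variable {A : Type} (T : PrefTree A)

theorem exists_forall_pref_of_finite {S : Set (List A)} (hS : S.Finite) (hSH : S ⊆ T.H)
    (hne : S.Nonempty) : ∃ z ∈ S, ∀ w ∈ S, T.pref z w := by
  induction S, hS using Set.Finite.induction_on with
  | empty => exact absurd hne Set.not_nonempty_empty
  | @insert x S _ _ ih =>
    have hxH : x ∈ T.H := hSH (Set.mem_insert x S)
    have hSH' : S ⊆ T.H := (Set.subset_insert x S).trans hSH
    rcases S.eq_empty_or_nonempty with rfl | hS
    · exact ⟨x, Set.mem_insert x ∅, by simpa using T.pref_refl x hxH⟩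
    obtain ⟨z, hz, hzmax⟩ := ih hSH' hS
    rcases T.pref_total x hxH z (hSH' hz) with hxz | hzx
    · refine ⟨x, Set.mem_insert x S, ?_⟩
      rintro w (rfl | hw)
      · exact T.pref_refl w hxH
      · exact T.pref_trans x hxH z (hSH' hz) w (hSH' hw) hxz (hzmax w hw)
    · refine ⟨z, Set.mem_insert_of_mem x hz, ?_⟩
      rintro w (rfl | hw)
      exacts [hzx, hzmax w hw]

end PrefTree

namespace SightFun

variable {A : Type} {T : PrefTree A} (s : SightFun A T) {h : List A}

theorem Zs_subset : s.Zs h ⊆ s.s h := fun _ hz => hz.1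

/-- A longest history of `s(h)` extending `h'` has no proper extension in `s(h)`. -/
theorem exists_mem_Zs_prefix (hh : h ∈ T.H) {h' : List A} (hh' : h' ∈ s.s h) :
    ∃ z ∈ s.Zs h, h' <+: z := by
  have hfin : {w ∈ s.s h | h' <+: w}.Finite := (s.s_finite h hh).subset fun _ hw => hw.1
  obtain ⟨z, ⟨hz, hh'z⟩, hzmax⟩ :=
    hfin.exists_maximalFor List.length _ ⟨h', hh', List.prefix_refl h'⟩
  refine ⟨z, ⟨hz, fun z' hz' hzz' => ?_⟩, hh'z⟩
  exact (hzz'.eq_of_length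
    (le_antisymm hzz'.length_le (hzmax ⟨hz', hh'z.trans hzz'⟩ hzz'.length_le))).symm

theorem exists_pref_max_Zs_prefix (hh : h ∈ T.H) {h' : List A} (hh' : h' ∈ s.s h) :
    ∃ z ∈ s.Zs h, h' <+: z ∧ ∀ w ∈ s.Zs h, h' <+: w → T.pref z w := by
  obtain ⟨z₀, hz₀, hh'z₀⟩ := s.exists_mem_Zs_prefix hh hh'
  obtain ⟨z, ⟨hz, hh'z⟩, hzmax⟩ := T.exists_forall_pref_of_finite (S := {w ∈ s.Zs h | h' <+: w})
    (((s.s_finite h hh).subset s.Zs_subset).subset fun _ hw => hw.1)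
    (fun _ hw => s.subset_H h hh (s.Zs_subset hw.1)) ⟨z₀, hz₀, hh'z₀⟩
  exact ⟨z, hz, hh'z, fun w hw hh'w => hzmax w ⟨hw, hh'w⟩⟩

end SightFun

/-- Within a visible tree, the initial move determined by the local backward
induction strategy is weakly preferred, w.r.t. the subjective preference, to
any other first move: if `z*` is a `⪰`-maximal element of `Z_h` and `h·a ⊴ z*`,
then for every action `a'` with `h·a' ∈ s(h)` we have `h·a ⪰_h h·a'`. -/
theorem stmt12 {A : Type} (T : PrefTree A) (s : SightFun A T)
    (h zstar : List A) (a : A)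
    (hh : h ∈ T.H) (hz : zstar ∈ s.Zs h) (hmax : ∀ w ∈ s.Zs h, T.pref zstar w)
    (ha : (h ++ [a]) <+: zstar) :
    ∀ a' : A, (h ++ [a']) ∈ s.s h → SubjPref T s h (h ++ [a]) (h ++ [a']) := by
  intro a' ha'
  obtain ⟨z', hz', ha'z', hz'max⟩ := s.exists_pref_max_Zs_prefix hh ha'
  exact ⟨zstar, z', hz, ha, fun w hw _ => hmax w hw, hz', ha'z', hz'max, hmax z' hz'⟩
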